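/- Factoriality criterion: Let G = (V,E,r) be a graph. The monoid A(G) is factorial — that is, every nonzero a ∈ A(G) has a factorization into atoms that is unique up to a permutation of the summands: if a = b₁ + ⋯ + b_k = c₁ + ⋯ + c_l with all b_i and c_j atoms of A(G), then k = l and, after a permutation, b_i = c_i for all i — if and only if every connected component of G contains at most one edge; equivalently, if and only if no two distinct edges of G share an endpoint. -/

import Mathlib

/-- An agglomeration on the graph given by `r : E → Sym2 V`. -/
def IsAgg {V E : Type*} (r : E → Sym2 V) (a : (V → ℕ) × (E → ℕ)) : Prop :=
  ∀ (e : E) (v : V), v ∈ r e → a.2 e ≤ a.1 v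

/-- An atom of the monoid of agglomerations. -/
def IsAtomAgg {V E : Type*} (r : E → Sym2 V) (a : (V → ℕ) × (E → ℕ)) : Prop :=
  IsAgg r a ∧ a ≠ 0 ∧
    ∀ b c : (V → ℕ) × (E → ℕ), IsAgg r b → IsAgg r c → a = b + c → b = 0 ∨ c = 0

/-!
Every nonzero agglomeration splits into atoms, by induction on its total vertex weight.

Write `𝟙ₑ` (`edgeAgg r e`) for the indicator of the edge `e` and its endpoints; it is an atom. If two distinct
edges `e, e'` share a vertex, then `𝟙ₑ + 𝟙ₑ'` is also the sum of the atom supported on `e, e'` and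
their endpoints and of the indicator of their common endpoints; factoring the latter gives a
second factorization in which `𝟙ₑ` does not occur.

If no two edges share an endpoint, subtracting `𝟙ₑ` from an agglomeration that carries `e` leaves
an agglomeration, so every atom is a single vertex or some `𝟙ₑ`. In a factorization of `a` the
atom `𝟙ₑ` then occurs `a.2 e` times and the vertex atom at `v` occurs `a.1 v - ∑_{e ∋ v} a.2 e`
times, so any two factorizations agree up to permutation.
-/

open Finset

lemma exists_equiv_of_card_filter_eq {α β γ : Type*} [Fintype α] [Fintype β] [DecidableEq γ]
    {f : α → γ} {g : β → γ} (h : ∀ x, #{i | f i = x} = #{j | g j = x}) :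
    ∃ σ : α ≃ β, ∀ i, f i = g (σ i) :=
  ⟨Equiv.ofFiberEquiv fun x => Fintype.equivOfCardEq (by simpa [Fintype.card_subtype] using h x),
    fun i => (Equiv.ofFiberEquiv_map _ i).symm⟩

section Agglomerations

open Classical

variable {V E : Type*} {r : E → Sym2 V}

lemma IsAgg.add {a b : (V → ℕ) × (E → ℕ)} (ha : IsAgg r a) (hb : IsAgg r b) :
    IsAgg r (a + b) :=
  fun e v hv => add_le_add (ha e v hv) (hb e v hv)

lemma IsAgg.of_snd_eq_zero {a : (V → ℕ) × (E → ℕ)} (h : a.2 = 0) : IsAgg r a := by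
  intro e v _
  simp [h]

lemma IsAgg.eq_zero_of_fst_eq_zero {a : (V → ℕ) × (E → ℕ)} (ha : IsAgg r a) (h : a.1 = 0) :
    a = 0 := by
  refine Prod.ext h (funext fun e => ?_)
  simpa [h] using ha e _ (Sym2.out_fst_mem (r e))

lemma IsAgg.sum_fst_pos [Fintype V] {a : (V → ℕ) × (E → ℕ)} (ha : IsAgg r a) (h0 : a ≠ 0) :
    0 < ∑ v, a.1 v := by
  refine Nat.pos_of_ne_zero fun hsum => h0 (ha.eq_zero_of_fst_eq_zero (funext fun v => ?_))
  exact (sum_eq_zero_iff.1 hsum) v (mem_univ v)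

theorem IsAgg.exists_sum_isAtomAgg [Fintype V] {a : (V → ℕ) × (E → ℕ)} (ha : IsAgg r a)
    (h0 : a ≠ 0) :
    ∃ (k : ℕ) (b : Fin k → (V → ℕ) × (E → ℕ)), (∀ i, IsAtomAgg r (b i)) ∧ a = ∑ i, b i := by
  induction hn : ∑ v, a.1 v using Nat.strong_induction_on generalizing a with
  | _ n ih =>
    by_cases hat : IsAtomAgg r a
    · exact ⟨1, fun _ => a, fun _ => hat, by simp⟩
    obtain ⟨b, c, hb, hc, rfl, hb0, hc0⟩ :
        ∃ b c, IsAgg r b ∧ IsAgg r c ∧ a = b + c ∧ b ≠ 0 ∧ c ≠ 0 := by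
      simpa [IsAtomAgg, ha, h0] using hat
    have hn' : ∑ v, b.1 v + ∑ v, c.1 v = n := by
      rw [← hn, ← sum_add_distrib]
      rfl
    obtain ⟨k, b', hb', rfl⟩ := ih _ (by have := hc.sum_fst_pos hc0; omega) hb hb0 rfl
    obtain ⟨l, c', hc', rfl⟩ := ih _ (by have := hb.sum_fst_pos hb0; omega) hc hc0 rfl
    refine ⟨k + l, Fin.append b' c', Fin.addCases (by simpa using hb') (by simpa using hc'), ?_⟩
    simp [Fin.sum_univ_add]

lemma IsAtomAgg.eq_of_le {a b : (V → ℕ) × (E → ℕ)} (ha : IsAtomAgg r a) (hb : IsAgg r b)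
    (hb0 : b ≠ 0) (hba : b ≤ a) (hsub : IsAgg r (a - b)) : a = b := by
  rcases ha.2.2 b (a - b) hb hsub (add_tsub_cancel_of_le hba).symm with h | h
  · exact absurd h hb0
  · exact le_antisymm (tsub_eq_zero_iff_le.1 h) hba

lemma IsAgg.eq_zero_of_cover {b c : (V → ℕ) × (E → ℕ)} (hc : IsAgg r c)
    (hle : ∀ u, b.1 u + c.1 u ≤ 1) (hcover : ∀ u, b.1 u + c.1 u ≠ 0 → b.1 u ≠ 0) : c = 0 := by
  refine hc.eq_zero_of_fst_eq_zero (funext fun u => ?_)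
  have := hle u
  have := hcover u
  simp only [Pi.zero_apply]
  omega

lemma isAtomAgg_of_cover {a : (V → ℕ) × (E → ℕ)} (ha : IsAgg r a) (h0 : a ≠ 0)
    (hle : ∀ u, a.1 u ≤ 1)
    (hcover : ∀ b c, IsAgg r b → IsAgg r c → a = b + c →
      (∀ u, a.1 u ≠ 0 → b.1 u ≠ 0) ∨ (∀ u, a.1 u ≠ 0 → c.1 u ≠ 0)) :
    IsAtomAgg r a := by
  refine ⟨ha, h0, fun b c hb hc habc => ?_⟩
  subst habc
  rcases hcover b c hb hc rfl with hcov | hcov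
  · exact .inr (hc.eq_zero_of_cover hle hcov)
  · exact .inl (hb.eq_zero_of_cover (fun u => (add_comm _ _).trans_le (hle u))
      fun u hu => hcov u ((add_comm _ _).trans_ne hu))

noncomputable def vertexAgg (v : V) : (V → ℕ) × (E → ℕ) :=
  (Pi.single v 1, 0)

noncomputable def edgePairAgg (r : E → Sym2 V) (e e' : E) : (V → ℕ) × (E → ℕ) :=
  (fun u => if u ∈ r e ∨ u ∈ r e' then 1 else 0, fun f => if f = e ∨ f = e' then 1 else 0)

-- The case `e = e'` of `edgePairAgg`, so that its atomicity comes for free.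
noncomputable def edgeAgg (r : E → Sym2 V) (e : E) : (V → ℕ) × (E → ℕ) :=
  edgePairAgg r e e

noncomputable def commonVertexAgg (r : E → Sym2 V) (e e' : E) : (V → ℕ) × (E → ℕ) :=
  (fun u => if u ∈ r e ∧ u ∈ r e' then 1 else 0, 0)

@[simp] lemma vertexAgg_fst (v : V) : (vertexAgg v : (V → ℕ) × (E → ℕ)).1 = Pi.single v 1 := rfl
@[simp] lemma vertexAgg_snd (v : V) : (vertexAgg v : (V → ℕ) × (E → ℕ)).2 = 0 := rfl

@[simp] lemma edgePairAgg_fst_apply (e e' : E) (u : V) :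
    (edgePairAgg r e e').1 u = if u ∈ r e ∨ u ∈ r e' then 1 else 0 := rfl
@[simp] lemma edgePairAgg_snd_apply (e e' f : E) :
    (edgePairAgg r e e').2 f = if f = e ∨ f = e' then 1 else 0 := rfl

@[simp] lemma edgeAgg_fst_apply (e : E) (u : V) :
    (edgeAgg r e).1 u = if u ∈ r e then 1 else 0 := by
  simp [edgeAgg]
@[simp] lemma edgeAgg_snd_apply (e f : E) : (edgeAgg r e).2 f = if f = e then 1 else 0 := by
  simp [edgeAgg]

@[simp] lemma commonVertexAgg_fst_apply (e e' : E) (u : V) :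
    (commonVertexAgg r e e').1 u = if u ∈ r e ∧ u ∈ r e' then 1 else 0 := rfl
@[simp] lemma commonVertexAgg_snd (e e' : E) : (commonVertexAgg r e e').2 = 0 := rfl

lemma vertexAgg_injective : Function.Injective (vertexAgg : V → (V → ℕ) × (E → ℕ)) := by
  intro v w h
  simpa [Pi.single_apply, eq_comm] using (congrFun (congrArg Prod.fst h) v).symm

lemma edgeAgg_injective : Function.Injective (edgeAgg r) := by
  intro e f h
  simpa using congrFun (congrArg Prod.snd h) e

lemma edgeAgg_ne_vertexAgg (e : E) (v : V) : edgeAgg r e ≠ vertexAgg v := by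
  intro h
  simpa using congrFun (congrArg Prod.snd h) e

lemma isAtomAgg_vertexAgg (v : V) : IsAtomAgg r (vertexAgg v : (V → ℕ) × (E → ℕ)) := by
  refine isAtomAgg_of_cover (.of_snd_eq_zero rfl)
    (fun h => by simpa using congrFun (congrArg Prod.fst h) v)
    (fun u => by rcases eq_or_ne u v with rfl | hu <;> simp [*]) fun b c _ _ h => ?_
  have hv : b.1 v + c.1 v = 1 := by simpa using (congrFun (congrArg Prod.fst h) v).symm
  have hsupp : ∀ u, (vertexAgg v : (V → ℕ) × (E → ℕ)).1 u ≠ 0 → u = v := by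
    intro u hu
    by_contra huv
    simp [huv] at hu
  rcases Nat.eq_zero_or_pos (b.1 v) with hb | hb
  · exact .inr fun u hu => by rw [hsupp u hu]; omega
  · exact .inl fun u hu => by rw [hsupp u hu]; omega

lemma isAtomAgg_edgePairAgg {e e' : E} {v : V} (hv : v ∈ r e) (hv' : v ∈ r e') :
    IsAtomAgg r (edgePairAgg r e e') := by
  have cover : ∀ b c, IsAgg r b → IsAgg r c → edgePairAgg r e e' = b + c → b.2 e ≠ 0 →
      ∀ u, (edgePairAgg r e e').1 u ≠ 0 → b.1 u ≠ 0 := by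
    intro b c hb hc h hbe u hu
    have hfst : ∀ u, (edgePairAgg r e e').1 u = b.1 u + c.1 u :=
      fun u => congrFun (congrArg Prod.fst h) u
    have hsnd : ∀ f, (edgePairAgg r e e').2 f = b.2 f + c.2 f :=
      fun f => congrFun (congrArg Prod.snd h) f
    -- `b` carries `e`, hence all of `v`, so `c` carries nothing at `v` and thus not `e'`
    have hcv : c.1 v = 0 := by
      have := hfst v; have := hb e v hv; simp [hv] at *; omega
    have hbe' : b.2 e' ≠ 0 := by
      have := hsnd e'; have := hc e' v hv'; simp at *; omega
    obtain hu | hu : u ∈ r e ∨ u ∈ r e' := by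
      by_contra h
      simp [h] at hu
    · have := hb e u hu; omega
    · have := hb e' u hu; omega
  refine isAtomAgg_of_cover (fun f u hu => ?_)
    (fun h => by simpa using congrFun (congrArg Prod.snd h) e)
    (fun u => by simp only [edgePairAgg_fst_apply]; split_ifs <;> simp) fun b c hb hc h => ?_
  · simp only [edgePairAgg_snd_apply, edgePairAgg_fst_apply]
    split_ifs with hf <;> aesop
  have he : b.2 e + c.2 e = 1 := by simpa using (congrFun (congrArg Prod.snd h) e).symm
  rcases Nat.eq_zero_or_pos (b.2 e) with hb0 | hb0
  · exact .inr (cover c b hc hb (h.trans (add_comm b c)) (by omega))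
  · exact .inl (cover b c hb hc h (by omega))

lemma isAtomAgg_edgeAgg (e : E) : IsAtomAgg r (edgeAgg r e) :=
  isAtomAgg_edgePairAgg (Sym2.out_fst_mem (r e)) (Sym2.out_fst_mem (r e))

lemma edgePairAgg_add_commonVertexAgg {e e' : E} (hee : e ≠ e') :
    edgePairAgg r e e' + commonVertexAgg r e e' = edgeAgg r e + edgeAgg r e' := by
  refine Prod.ext (funext fun u => ?_) (funext fun f => ?_)
  · simp only [Prod.fst_add, Pi.add_apply, edgePairAgg_fst_apply, commonVertexAgg_fst_apply,
      edgeAgg_fst_apply]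
    split_ifs <;> tauto
  · simp only [Prod.snd_add, Pi.add_apply, edgePairAgg_snd_apply, commonVertexAgg_snd,
      edgeAgg_snd_apply]
    split_ifs <;> simp_all

theorem exists_sum_isAtomAgg_ne_edgeAgg [Fintype V] {e e' : E} (hee : e ≠ e') {v : V}
    (hv : v ∈ r e) (hv' : v ∈ r e') :
    ∃ (m : ℕ) (d : Fin m → (V → ℕ) × (E → ℕ)), (∀ j, IsAtomAgg r (d j)) ∧
      ∑ j, d j = edgeAgg r e + edgeAgg r e' ∧ ∀ j, d j ≠ edgeAgg r e := by
  have hcommon : commonVertexAgg r e e' ≠ 0 := fun h => by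
    simpa [hv, hv'] using congrFun (congrArg Prod.fst h) v
  obtain ⟨m, d, hd, hsum⟩ :=
    (IsAgg.of_snd_eq_zero (commonVertexAgg_snd e e')).exists_sum_isAtomAgg hcommon
  refine ⟨m + 1, Fin.cons (edgePairAgg r e e') d, Fin.cons (isAtomAgg_edgePairAgg hv hv') hd,
    by rw [Fin.sum_cons, ← hsum, edgePairAgg_add_commonVertexAgg hee], Fin.cases ?_ fun j => ?_⟩
  · intro h
    simpa [Ne.symm hee] using congrFun (congrArg Prod.snd h) e'
  · rw [Fin.cons_succ]
    intro h
    have hle : d j ≤ ∑ j, d j := single_le_sum (fun _ _ => zero_le) (mem_univ j)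
    simpa [h, ← hsum] using hle.2 e

def EdgesPairwiseDisjoint (r : E → Sym2 V) : Prop :=
  ∀ e e' : E, e ≠ e' → ∀ v : V, v ∈ r e → v ∉ r e'

lemma IsAgg.edgeAgg_le {a : (V → ℕ) × (E → ℕ)} (ha : IsAgg r a) {e : E} (he : a.2 e ≠ 0) :
    edgeAgg r e ≤ a := by
  refine ⟨fun u => ?_, fun f => ?_⟩
  · by_cases hu : u ∈ r e
    · have := ha e u hu; simp [hu]; omega
    · simp [hu]
  · by_cases hf : f = e
    · subst hf; simp; omega
    · simp [hf]

lemma IsAgg.sub_edgeAgg (H : EdgesPairwiseDisjoint r) {a : (V → ℕ) × (E → ℕ)} (ha : IsAgg r a)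
    (e : E) : IsAgg r (a - edgeAgg r e) := by
  intro f u hu
  have := ha f u hu
  by_cases hf : f = e
  · subst hf; simp [hu]; omega
  · simp [hf, H f e hf u hu, this]

lemma IsAtomAgg.eq_vertexAgg_or_eq_edgeAgg (H : EdgesPairwiseDisjoint r)
    {x : (V → ℕ) × (E → ℕ)} (hx : IsAtomAgg r x) :
    (∃ v, x = vertexAgg v) ∨ ∃ e, x = edgeAgg r e := by
  by_cases h2 : x.2 = 0
  · obtain ⟨v, hv⟩ : ∃ v, x.1 v ≠ 0 := by
      by_contra! h1
      exact hx.2.1 (Prod.ext (funext h1) h2)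
    have hvx := isAtomAgg_vertexAgg (r := r) v
    have hle : vertexAgg v ≤ x :=
      ⟨fun u => by rcases eq_or_ne u v with rfl | hu <;> simp [*]; omega, by simp⟩
    exact .inl ⟨v, hx.eq_of_le hvx.1 hvx.2.1 hle (.of_snd_eq_zero (by simp [h2]))⟩
  · obtain ⟨e, he⟩ : ∃ e, x.2 e ≠ 0 := by
      by_contra! h1
      exact h2 (funext h1)
    have hex := isAtomAgg_edgeAgg (r := r) e
    exact .inr ⟨e, hx.eq_of_le hex.1 hex.2.1 (hx.1.edgeAgg_le he) (hx.1.sub_edgeAgg H e)⟩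

lemma IsAtomAgg.snd_apply (H : EdgesPairwiseDisjoint r) {x : (V → ℕ) × (E → ℕ)}
    (hx : IsAtomAgg r x) (e : E) [Decidable (x = edgeAgg r e)] :
    x.2 e = if x = edgeAgg r e then 1 else 0 := by
  rcases hx.eq_vertexAgg_or_eq_edgeAgg H with ⟨v, rfl⟩ | ⟨f, rfl⟩
  · simp [(edgeAgg_ne_vertexAgg e v).symm]
  · simp [edgeAgg_injective.eq_iff, eq_comm]

lemma IsAtomAgg.fst_apply (H : EdgesPairwiseDisjoint r) [Fintype E] {x : (V → ℕ) × (E → ℕ)}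
    (hx : IsAtomAgg r x) (v : V) [Decidable (x = vertexAgg v)] :
    x.1 v = (if x = vertexAgg v then 1 else 0) + ∑ e with v ∈ r e, x.2 e := by
  rcases hx.eq_vertexAgg_or_eq_edgeAgg H with ⟨w, rfl⟩ | ⟨f, rfl⟩
  · simp [Pi.single_apply, vertexAgg_injective.eq_iff, eq_comm]
  · simp [edgeAgg_ne_vertexAgg, sum_ite_eq']

section Counting

variable [Fintype E] {k : ℕ} {b : Fin k → (V → ℕ) × (E → ℕ)}

lemma card_filter_eq_edgeAgg (H : EdgesPairwiseDisjoint r) (hb : ∀ i, IsAtomAgg r (b i))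
    (e : E) : #{i | b i = edgeAgg r e} = (∑ i, b i).2 e := by
  simp only [card_filter, Prod.snd_sum, Finset.sum_apply, (hb _).snd_apply H]

lemma card_filter_eq_vertexAgg_add (H : EdgesPairwiseDisjoint r) (hb : ∀ i, IsAtomAgg r (b i))
    (v : V) : #{i | b i = vertexAgg v} + ∑ e with v ∈ r e, (∑ i, b i).2 e = (∑ i, b i).1 v := by
  simp only [Prod.fst_sum, Prod.snd_sum, Finset.sum_apply, (hb _).fst_apply H, sum_add_distrib,
    card_filter]
  rw [sum_comm]

end Counting

theorem exists_equiv_of_sum_eq [Fintype E] (H : EdgesPairwiseDisjoint r) {k l : ℕ}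
    {b : Fin k → (V → ℕ) × (E → ℕ)} {c : Fin l → (V → ℕ) × (E → ℕ)}
    (hb : ∀ i, IsAtomAgg r (b i)) (hc : ∀ j, IsAtomAgg r (c j)) (hbc : ∑ i, b i = ∑ j, c j) :
    ∃ σ : Fin k ≃ Fin l, ∀ i, b i = c (σ i) := by
  refine exists_equiv_of_card_filter_eq fun x => ?_
  by_cases hx : IsAtomAgg r x
  · rcases hx.eq_vertexAgg_or_eq_edgeAgg H with ⟨v, rfl⟩ | ⟨e, rfl⟩
    · have hb' := card_filter_eq_vertexAgg_add H hb v
      have hc' := card_filter_eq_vertexAgg_add H hc v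
      rw [hbc] at hb'
      omega
    · rw [card_filter_eq_edgeAgg H hb, card_filter_eq_edgeAgg H hc, hbc]
  · have hempty {n : ℕ} (d : Fin n → (V → ℕ) × (E → ℕ)) (hd : ∀ i, IsAtomAgg r (d i)) :
        #{i | d i = x} = 0 :=
      card_eq_zero.2 (filter_eq_empty_iff.2 fun i _ hi => hx (hi ▸ hd i))
    rw [hempty b hb, hempty c hc]

end Agglomerations

theorem factorial_iff_general {V E : Type*} [Fintype V] [Fintype E]
    (r : E → Sym2 V) :
    (∀ a : (V → ℕ) × (E → ℕ), IsAgg r a → a ≠ 0 →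
      (∃ (k : ℕ) (b : Fin k → (V → ℕ) × (E → ℕ)),
        (∀ i, IsAtomAgg r (b i)) ∧ a = ∑ i, b i) ∧
      (∀ (k l : ℕ) (b : Fin k → (V → ℕ) × (E → ℕ)) (c : Fin l → (V → ℕ) × (E → ℕ)),
        (∀ i, IsAtomAgg r (b i)) → (∀ j, IsAtomAgg r (c j)) →
        a = ∑ i, b i → a = ∑ j, c j →
        ∃ σ : Fin k ≃ Fin l, ∀ i, b i = c (σ i))) ↔
    (∀ e e' : E, e ≠ e' → ∀ v : V, v ∈ r e → v ∉ r e') := by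
  constructor
  · intro hfact e e' hee v hv hv'
    obtain ⟨m, d, hd, hsum, hne⟩ := exists_sum_isAtomAgg_ne_edgeAgg hee hv hv'
    have he := isAtomAgg_edgeAgg (r := r) e
    have he' := isAtomAgg_edgeAgg (r := r) e'
    obtain ⟨σ, hσ⟩ := (hfact _ (he.1.add he'.1) (by simp [he.2.1])).2 2 m
      ![edgeAgg r e, edgeAgg r e'] d (Fin.forall_fin_two.2 ⟨he, he'⟩) hd (by simp) hsum.symm
    exact hne (σ 0) (hσ 0).symm
  · intro H a ha h0
    exact ⟨ha.exists_sum_isAtomAgg h0, fun k l b c hb hc hab hac =>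
      exists_equiv_of_sum_eq H hb hc (hab.symm.trans hac)⟩

/-- **Factoriality criterion**: `A(G)` is factorial (every nonzero element has a
factorization into atoms, unique up to permutation) if and only if no two distinct edges
of `G` share an endpoint (equivalently, every connected component of `G` contains at most
one edge). -/
theorem factorial_iff {V E : Type*} [Fintype V] [Fintype E]
    (r : E → Sym2 V) (hr : ∀ e : E, ¬ (r e).IsDiag) :
    (∀ a : (V → ℕ) × (E → ℕ), IsAgg r a → a ≠ 0 →
      (∃ (k : ℕ) (b : Fin k → (V → ℕ) × (E → ℕ)),
        (∀ i, IsAtomAgg r (b i)) ∧ a = ∑ i, b i) ∧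
      (∀ (k l : ℕ) (b : Fin k → (V → ℕ) × (E → ℕ)) (c : Fin l → (V → ℕ) × (E → ℕ)),
        (∀ i, IsAtomAgg r (b i)) → (∀ j, IsAtomAgg r (c j)) →
        a = ∑ i, b i → a = ∑ j, c j →
        ∃ σ : Fin k ≃ Fin l, ∀ i, b i = c (σ i))) ↔
    (∀ e e' : E, e ≠ e' → ∀ v : V, v ∈ r e → v ∉ r e') :=
  factorial_iff_general r
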